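/- arXiv:2309.08571 — 2 statements merged into one kernel-verified Lean document; each statement's English description precedes it below -/
import Mathlib

section
/- Let ε = E_{(s,a)∼ρ} D_KL(P(·|s,a) ‖ P̂(·|s,a)) where ρ is a state-action distribution, and suppose ‖V‖_∞ ≤ R_max/(1−γ). Then |Σ_{t≥0} γ^{t+1} E_{(s_t,a_t)}[Σ_{s'} V(s')(P̂(s'|s_t,a_t) − P(s'|s_t,a_t))]| ≤ (γ R_max/(1−γ)²)·√(2ε), where each (s_t,a_t) pair is distributed according to a sequence of distributions whose average KL is at most ε. -/
/-!
Pinsker's inequality does the work. For `x ≥ 0` one has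
`klFun x = x log x + 1 - x ≥ 3 (x - 1)² / (2 (x + 2))`, because the difference of the two sides,
multiplied by `2 (x + 2)`, is convex on `[0, ∞)` with a critical point at `1`. Applied at
`x = p / q` and combined with Cauchy–Schwarz for the weights `p + 2 q` (of total mass `3`), it gives
`(∑ |p - q|)² ≤ 2 KL(p ‖ q)`. Hölder against `‖V‖∞` and Jensen for the concave square root bound
each time step by `‖V‖∞ √(2ε)`, and the discount factors sum to `γ / (1 - γ)`.
-/

open Real Set Finset InformationTheory

lemma three_mul_sq_sub_one_le_mul_klFun {x : ℝ} (hx : 0 ≤ x) :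
    3 * (x - 1) ^ 2 ≤ 2 * (x + 2) * klFun x := by
  set g : ℝ → ℝ := fun x ↦ 2 * (x + 2) * klFun x - 3 * (x - 1) ^ 2
  have hg' : ∀ x ≠ 0, HasDerivAt g (4 * ((x + 1) * log x - 2 * (x - 1))) x := fun x hx ↦ by
    refine ((((hasDerivAt_id x).add_const 2).const_mul 2).mul (hasDerivAt_klFun hx) |>.sub
      ((((hasDerivAt_id x).sub_const 1).pow 2).const_mul 3)).congr_deriv ?_
    simp only [klFun_apply, id]; ring
  have hg'' : ∀ x ≠ 0,
      HasDerivAt (fun x ↦ 4 * ((x + 1) * log x - 2 * (x - 1))) (4 * (log x - 1 + x⁻¹)) x :=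
    fun x hx ↦ by
      refine (((((hasDerivAt_id x).add_const 1).mul (hasDerivAt_log hx)).sub
        (((hasDerivAt_id x).sub_const 1).const_mul 2)).const_mul 4).congr_deriv ?_
      simp only [id]; field_simp; ring
  have hconvex : ConvexOn ℝ (Ici 0) g := by
    have hpos : ∀ x ∈ interior (Ici (0 : ℝ)), 0 < x := by simp
    exact convexOn_of_hasDerivWithinAt2_nonneg (convex_Ici 0) (by fun_prop)
      (fun x hx ↦ (hg' x (hpos x hx).ne').hasDerivWithinAt)
      (fun x hx ↦ (hg'' x (hpos x hx).ne').hasDerivWithinAt)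
      (fun x hx ↦ by linarith [one_sub_inv_le_log_of_pos (hpos x hx)])
  have hmin : IsMinOn g (Ici 0) 1 := by
    refine hconvex.isMinOn_of_rightDeriv_eq_zero (by simp) ?_
    rw [((hg' 1 one_ne_zero).hasDerivWithinAt).derivWithin (uniqueDiffWithinAt_Ioi 1)]
    simp
  simpa [g, klFun_one, sub_nonneg] using hmin (mem_Ici.2 hx)

-- The hypothesis handles `q = 0`, where `p / q = 0` by convention.
lemma mul_klFun_div {p q : ℝ} (hpq : q = 0 → p = 0) :
    q * klFun (p / q) = p * log (p / q) + q - p := by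
  rcases eq_or_ne q 0 with rfl | hq
  · simp [hpq rfl]
  · rw [klFun_apply]; field_simp

lemma three_mul_sq_sub_le_mul_mul_klFun_div {p q : ℝ} (hp : 0 ≤ p) (hq : 0 ≤ q)
    (hpq : q = 0 → p = 0) :
    3 * (p - q) ^ 2 ≤ 2 * (p + 2 * q) * (q * klFun (p / q)) := by
  rcases hq.eq_or_lt with rfl | hq
  · simp [hpq rfl]
  · have hx := three_mul_sq_sub_one_le_mul_klFun (div_nonneg hp hq.le)
    calc 3 * (p - q) ^ 2 = q ^ 2 * (3 * (p / q - 1) ^ 2) := by field_simp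
      _ ≤ q ^ 2 * (2 * (p / q + 2) * klFun (p / q)) := by gcongr
      _ = 2 * (p + 2 * q) * (q * klFun (p / q)) := by field_simp

theorem sq_sum_abs_sub_le_two_mul_sum_mul_log {ι : Type*} (s : Finset ι) {p q : ι → ℝ}
    (hp : ∀ i ∈ s, 0 ≤ p i) (hq : ∀ i ∈ s, 0 ≤ q i)
    (hp1 : ∑ i ∈ s, p i = 1) (hq1 : ∑ i ∈ s, q i = 1) (hpq : ∀ i ∈ s, q i = 0 → p i = 0) :
    (∑ i ∈ s, |p i - q i|) ^ 2 ≤ 2 * ∑ i ∈ s, p i * log (p i / q i) := by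
  have hCS := sum_sq_le_sum_mul_sum_of_sq_le_mul s (r := fun i ↦ |p i - q i|)
    (f := fun i ↦ p i + 2 * q i) (g := fun i ↦ 2 / 3 * (q i * klFun (p i / q i)))
    (fun i hi ↦ by linarith [hp i hi, hq i hi])
    (fun i hi ↦ mul_nonneg (by norm_num)
      (mul_nonneg (hq i hi) (klFun_nonneg (div_nonneg (hp i hi) (hq i hi)))))
    (fun i hi ↦ by
      have := three_mul_sq_sub_le_mul_mul_klFun_div (hp i hi) (hq i hi) (hpq i hi)
      rw [sq_abs]; linarith)
  calc (∑ i ∈ s, |p i - q i|) ^ 2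
      ≤ (∑ i ∈ s, (p i + 2 * q i)) * ∑ i ∈ s, 2 / 3 * (q i * klFun (p i / q i)) := hCS
    _ = 2 * ∑ i ∈ s, p i * log (p i / q i) := by
      rw [← mul_sum, sum_congr rfl fun i hi ↦ mul_klFun_div (hpq i hi), sum_add_distrib,
        ← mul_sum, sum_sub_distrib, sum_add_distrib, hp1, hq1]
      ring

lemma abs_sum_mul_sub_le_sqrt_two_mul_sum_mul_log {ι : Type*} (s : Finset ι) {p q : ι → ℝ}
    (hp : ∀ i ∈ s, 0 ≤ p i) (hq : ∀ i ∈ s, 0 ≤ q i)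
    (hp1 : ∑ i ∈ s, p i = 1) (hq1 : ∑ i ∈ s, q i = 1) (hpq : ∀ i ∈ s, q i = 0 → p i = 0)
    {V : ι → ℝ} {R : ℝ} (hR : 0 ≤ R) (hV : ∀ i ∈ s, |V i| ≤ R) :
    |∑ i ∈ s, V i * (q i - p i)| ≤ R * √(2 * ∑ i ∈ s, p i * log (p i / q i)) :=
  calc |∑ i ∈ s, V i * (q i - p i)| ≤ ∑ i ∈ s, R * |p i - q i| := by
        refine (abs_sum_le_sum_abs _ _).trans (sum_le_sum fun i hi ↦ ?_)
        rw [abs_mul, abs_sub_comm]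
        exact mul_le_mul_of_nonneg_right (hV i hi) (abs_nonneg _)
    _ ≤ R * √(2 * ∑ i ∈ s, p i * log (p i / q i)) := by
        rw [← mul_sum]
        exact mul_le_mul_of_nonneg_left
          (le_sqrt_of_sq_le (sq_sum_abs_sub_le_two_mul_sum_mul_log s hp hq hp1 hq1 hpq)) hR

lemma sum_mul_sqrt_le_sqrt_sum_mul {ι : Type*} (s : Finset ι) {w x : ι → ℝ}
    (hw : ∀ i ∈ s, 0 ≤ w i) (hw1 : ∑ i ∈ s, w i = 1) (hx : ∀ i ∈ s, 0 ≤ x i) :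
    ∑ i ∈ s, w i * √(x i) ≤ √(∑ i ∈ s, w i * x i) :=
  strictConcaveOn_sqrt.concaveOn.le_map_sum hw hw1 hx

lemma abs_tsum_pow_succ_mul_le {γ C : ℝ} (hγ0 : 0 ≤ γ) (hγ1 : γ < 1) {c : ℕ → ℝ}
    (hc : ∀ t, |c t| ≤ C) :
    |∑' t, γ ^ (t + 1) * c t| ≤ γ * C / (1 - γ) := by
  have hbound := tsum_of_norm_bounded (f := fun t ↦ γ ^ (t + 1) * c t)
    ((hasSum_geometric_of_lt_one hγ0 hγ1).mul_left (γ * C)) fun t ↦ by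
      rw [Real.norm_eq_abs, abs_mul, abs_pow, abs_of_nonneg hγ0, pow_succ, mul_assoc,
        mul_comm (γ * C)]
      gcongr
      exact hc t
  simpa only [Real.norm_eq_abs, div_eq_mul_inv] using hbound

lemma abs_sum_mul_sum_mul_sub_le {ι S : Type*} [Fintype ι] [Fintype S] {μ : ι → ℝ}
    (hμ0 : ∀ i, 0 ≤ μ i) (hμ1 : ∑ i, μ i = 1) {p q : ι → S → ℝ}
    (hp0 : ∀ i s, 0 ≤ p i s) (hq0 : ∀ i s, 0 ≤ q i s)
    (hp1 : ∀ i, ∑ s, p i s = 1) (hq1 : ∀ i, ∑ s, q i s = 1) (hpq : ∀ i s, q i s = 0 → p i s = 0)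
    {V : S → ℝ} {R : ℝ} (hR : 0 ≤ R) (hV : ∀ s, |V s| ≤ R) :
    |∑ i, μ i * ∑ s, V s * (q i s - p i s)| ≤
      R * √(2 * ∑ i, μ i * ∑ s, p i s * log (p i s / q i s)) := by
  set kl : ι → ℝ := fun i ↦ ∑ s, p i s * log (p i s / q i s)
  have hkl : ∀ i, 0 ≤ 2 * kl i := fun i ↦ (sq_nonneg _).trans <|
    sq_sum_abs_sub_le_two_mul_sum_mul_log univ (fun s _ ↦ hp0 i s) (fun s _ ↦ hq0 i s)
      (hp1 i) (hq1 i) (fun s _ ↦ hpq i s)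
  calc |∑ i, μ i * ∑ s, V s * (q i s - p i s)| ≤ ∑ i, μ i * (R * √(2 * kl i)) := by
        refine (abs_sum_le_sum_abs _ _).trans (sum_le_sum fun i _ ↦ ?_)
        rw [abs_mul, abs_of_nonneg (hμ0 i)]
        exact mul_le_mul_of_nonneg_left (abs_sum_mul_sub_le_sqrt_two_mul_sum_mul_log univ
          (fun s _ ↦ hp0 i s) (fun s _ ↦ hq0 i s) (hp1 i) (hq1 i) (fun s _ ↦ hpq i s) hR
          (fun s _ ↦ hV s)) (hμ0 i)
    _ = R * ∑ i, μ i * √(2 * kl i) := by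
        rw [mul_sum]; exact sum_congr rfl fun i _ ↦ by ring
    _ ≤ R * √(∑ i, μ i * (2 * kl i)) := by
        gcongr
        exact sum_mul_sqrt_le_sqrt_sum_mul univ (fun i _ ↦ hμ0 i) hμ1 fun i _ ↦ hkl i
    _ = R * √(2 * ∑ i, μ i * kl i) := by
        rw [mul_sum]; congr 2; exact sum_congr rfl fun i _ ↦ by ring

theorem discounted_model_mismatch_bound_general
    {S A : Type*} [Fintype S] [Fintype A]
    (γ Rmax ε : ℝ) (hγ : γ ∈ Set.Ioo (0 : ℝ) 1) (hRmax : 0 ≤ Rmax)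
    (P Phat : S → A → S → ℝ)
    (hP0 : ∀ s a s', 0 ≤ P s a s') (hP1 : ∀ s a, ∑ s', P s a s' = 1)
    (hPhat0 : ∀ s a s', 0 ≤ Phat s a s') (hPhat1 : ∀ s a, ∑ s', Phat s a s' = 1)
    (habs : ∀ s a s', Phat s a s' = 0 → P s a s' = 0)
    (μ : ℕ → S × A → ℝ)
    (hμ0 : ∀ t sa, 0 ≤ μ t sa) (hμ1 : ∀ t, ∑ sa, μ t sa = 1)
    (hKL : ∀ t, ∑ sa : S × A,
        μ t sa * ∑ s', P sa.1 sa.2 s' * Real.log (P sa.1 sa.2 s' / Phat sa.1 sa.2 s') ≤ ε)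
    (V : S → ℝ) (hV : ∀ s, |V s| ≤ Rmax / (1 - γ)) :
    |∑' t : ℕ, γ ^ (t + 1) *
        ∑ sa : S × A, μ t sa * ∑ s', V s' * (Phat sa.1 sa.2 s' - P sa.1 sa.2 s')| ≤
      γ * Rmax / (1 - γ) ^ 2 * Real.sqrt (2 * ε) := by
  obtain ⟨hγ0, hγ1⟩ := hγ
  have hR : 0 ≤ Rmax / (1 - γ) := div_nonneg hRmax (by linarith)
  have hstep : ∀ t, |∑ sa : S × A, μ t sa * ∑ s', V s' * (Phat sa.1 sa.2 s' - P sa.1 sa.2 s')| ≤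
      Rmax / (1 - γ) * √(2 * ε) := fun t ↦
    (abs_sum_mul_sum_mul_sub_le (hμ0 t) (hμ1 t) (fun sa ↦ hP0 sa.1 sa.2)
      (fun sa ↦ hPhat0 sa.1 sa.2) (fun sa ↦ hP1 sa.1 sa.2) (fun sa ↦ hPhat1 sa.1 sa.2)
      (fun sa ↦ habs sa.1 sa.2) hR hV).trans (by gcongr; exact hKL t)
  calc _ ≤ γ * (Rmax / (1 - γ) * √(2 * ε)) / (1 - γ) := abs_tsum_pow_succ_mul_le hγ0.le hγ1 hstep
    _ = γ * Rmax / (1 - γ) ^ 2 * √(2 * ε) := by rw [sq, ← div_div]; ring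

/-- Discounted accumulation of model-mismatch error (Lemma on |T1|): if for each
time `t` the state-action pair is drawn from a distribution `μ t` on `S × A`
whose expected KL between the kernels `P` and `Phat` is at most `ε`, and the
value function satisfies `‖V‖∞ ≤ Rmax / (1 - γ)`, then
`|∑ₜ γ^{t+1} E_{μ t}[∑_{s'} V s' (Phat(s'|s,a) - P(s'|s,a))]|
  ≤ (γ Rmax / (1-γ)²) √(2ε)`. -/
theorem discounted_model_mismatch_bound
    {S A : Type*} [Fintype S] [Fintype A]
    (γ Rmax ε : ℝ) (hγ : γ ∈ Set.Ioo (0 : ℝ) 1) (hRmax : 0 ≤ Rmax) (hε : 0 ≤ ε)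
    (P Phat : S → A → S → ℝ)
    (hP0 : ∀ s a s', 0 ≤ P s a s') (hP1 : ∀ s a, ∑ s', P s a s' = 1)
    (hPhat0 : ∀ s a s', 0 ≤ Phat s a s') (hPhat1 : ∀ s a, ∑ s', Phat s a s' = 1)
    (habs : ∀ s a s', Phat s a s' = 0 → P s a s' = 0)
    (μ : ℕ → S × A → ℝ)
    (hμ0 : ∀ t sa, 0 ≤ μ t sa) (hμ1 : ∀ t, ∑ sa, μ t sa = 1)
    (hKL : ∀ t, ∑ sa : S × A,
        μ t sa * ∑ s', P sa.1 sa.2 s' * Real.log (P sa.1 sa.2 s' / Phat sa.1 sa.2 s') ≤ ε)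
    (V : S → ℝ) (hV : ∀ s, |V s| ≤ Rmax / (1 - γ)) :
    |∑' t : ℕ, γ ^ (t + 1) *
        ∑ sa : S × A, μ t sa * ∑ s', V s' * (Phat sa.1 sa.2 s' - P sa.1 sa.2 s')| ≤
      γ * Rmax / (1 - γ) ^ 2 * Real.sqrt (2 * ε) :=
  discounted_model_mismatch_bound_general γ Rmax ε hγ hRmax P Phat hP0 hP1 hPhat0 hPhat1 habs μ hμ0
    hμ1 hKL V hV
end

section
/- Under the entropy-regularized Bellman identity log π̂(a|s) = Q(s,a) − V(s), the discounted expert log-likelihood decomposes as E_{P(τ)}[Σ_t γ^t log π̂(a_t|s_t)] = E_{ρ_D}[R(s,a)] − E_{s_0∼μ}[V(s_0)] + γ E_{ρ_D}[E_{s'∼P̂(·|s,a)} V(s') − E_{s''∼P(·|s,a)} V(s'')], where ρ_D is the discounted expert occupancy under the real dynamics P, μ is the initial state distribution, and Q(s,a) = R(s,a) + γ E_{s'∼P̂(·|s,a)}[V(s')]. -/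
/-- Decomposition of the discounted expert log-likelihood: with `ρ t` the time-`t`
state-action distribution of the expert process under the real dynamics `P`
(initial state distribution `μ`), `logpi s a = Q s a - V s` the entropy-regularized
Bellman identity, and `Q s a = R s a + γ E_{s' ~ Phat(·|s,a)}[V s']`, we have
`E[∑ₜ γ^t log π̂(aₜ|sₜ)] = E_ρ[R] - E_μ[V] + γ E_ρ[E_{Phat} V - E_P V]`. -/
theorem discounted_likelihood_decomposition
    {S A : Type*} [Fintype S] [Fintype A]
    (γ : ℝ) (hγ : γ ∈ Set.Ioo (0 : ℝ) 1)
    (P Phat : S → A → S → ℝ)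
    (hP0 : ∀ s a s', 0 ≤ P s a s') (hP1 : ∀ s a, ∑ s', P s a s' = 1)
    (hPhat0 : ∀ s a s', 0 ≤ Phat s a s') (hPhat1 : ∀ s a, ∑ s', Phat s a s' = 1)
    (μ : S → ℝ) (hμ0 : ∀ s, 0 ≤ μ s) (hμ1 : ∑ s, μ s = 1)
    (ρ : ℕ → S × A → ℝ)
    (hρ0 : ∀ t sa, 0 ≤ ρ t sa) (hρ1 : ∀ t, ∑ sa, ρ t sa = 1)
    -- time-0 state marginal is μ
    (hinit : ∀ s, (∑ a, ρ 0 (s, a)) = μ s)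
    -- the next state is drawn from the real dynamics P
    (hstep : ∀ t s', (∑ a, ρ (t + 1) (s', a)) =
      ∑ sa : S × A, ρ t sa * P sa.1 sa.2 s')
    (R : S → A → ℝ) (Q : S → A → ℝ) (V : S → ℝ) (logpi : S → A → ℝ)
    (hQ : ∀ s a, Q s a = R s a + γ * ∑ s', Phat s a s' * V s')
    (hlogpi : ∀ s a, logpi s a = Q s a - V s) :
    (∑' t : ℕ, γ ^ t * ∑ sa : S × A, ρ t sa * logpi sa.1 sa.2) =
      (∑' t : ℕ, γ ^ t * ∑ sa : S × A, ρ t sa * R sa.1 sa.2)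
        - (∑ s, μ s * V s)
        + γ * ∑' t : ℕ, γ ^ t * ∑ sa : S × A, ρ t sa *
            ((∑ s', Phat sa.1 sa.2 s' * V s') - (∑ s', P sa.1 sa.2 s' * V s')) := by

  obtain ⟨hγ0, hγ1⟩ := hγ
  have hρle : ∀ t sa, ρ t sa ≤ 1 := by
    intro t sa
    calc ρ t sa ≤ ∑ sa', ρ t sa' :=
          Finset.single_le_sum (fun i _ => hρ0 t i) (Finset.mem_univ sa)
      _ = 1 := hρ1 t
  have hbound : ∀ (g : S × A → ℝ) (t : ℕ),
      |∑ sa : S × A, ρ t sa * g sa| ≤ ∑ sa : S × A, |g sa| := by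
    intro g t
    calc |∑ sa : S × A, ρ t sa * g sa| ≤ ∑ sa : S × A, |ρ t sa * g sa| :=
          Finset.abs_sum_le_sum_abs _ _
      _ ≤ ∑ sa : S × A, |g sa| := by
          apply Finset.sum_le_sum
          intro sa _
          rw [abs_mul]
          calc |ρ t sa| * |g sa| ≤ 1 * |g sa| := by
                apply mul_le_mul_of_nonneg_right _ (abs_nonneg _)
                rw [abs_of_nonneg (hρ0 t sa)]; exact hρle t sa
            _ = |g sa| := one_mul _
  have hsum : ∀ (g : S × A → ℝ),
      Summable (fun t => γ ^ t * ∑ sa : S × A, ρ t sa * g sa) := by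
    intro g
    apply Summable.of_norm
    apply Summable.of_nonneg_of_le (fun t => norm_nonneg _) (fun t => ?_)
      ((summable_geometric_of_lt_one hγ0.le hγ1).mul_right (∑ sa : S × A, |g sa|))
    rw [Real.norm_eq_abs, abs_mul, abs_pow, abs_of_nonneg hγ0.le]
    exact mul_le_mul_of_nonneg_left (hbound g t) (pow_nonneg hγ0.le t)
  set W : ℕ → ℝ := fun t => ∑ sa : S × A, ρ t sa * V sa.1 with hWdef
  have hsumW : Summable (fun t => γ ^ t * W t) := hsum (fun sa => V sa.1)
  have hWstep : ∀ t, W (t + 1) = ∑ sa : S × A, ρ t sa * ∑ s', P sa.1 sa.2 s' * V s' := by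
    intro t
    have : W (t + 1) = ∑ s' : S, (∑ a, ρ (t + 1) (s', a)) * V s' := by
      simp only [hWdef, Fintype.sum_prod_type, Finset.sum_mul]
    rw [this]
    simp only [hstep, Finset.sum_mul]
    rw [Finset.sum_comm]
    congr 1; ext sa
    rw [Finset.mul_sum]
    congr 1; ext s'
    ring
  have hW0 : W 0 = ∑ s, μ s * V s := by
    simp only [hWdef, Fintype.sum_prod_type, ← Finset.sum_mul, hinit]
  have htel : ∑' t, γ ^ t * W t =
      (∑ s, μ s * V s) + γ * ∑' t, γ ^ t * ∑ sa : S × A, ρ t sa * ∑ s', P sa.1 sa.2 s' * V s' := by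
    rw [Summable.tsum_eq_zero_add hsumW, pow_zero, one_mul, hW0, ← tsum_mul_left]
    congr 1
    apply tsum_congr
    intro n
    rw [hWstep]
    ring
  have hdecomp : ∀ t, (∑ sa : S × A, ρ t sa * logpi sa.1 sa.2) =
      (∑ sa : S × A, ρ t sa * R sa.1 sa.2)
        + γ * (∑ sa : S × A, ρ t sa * ∑ s', Phat sa.1 sa.2 s' * V s') - W t := by
    intro t
    have h : ∀ sa : S × A, ρ t sa * logpi sa.1 sa.2 =
        ρ t sa * R sa.1 sa.2 + γ * (ρ t sa * ∑ s', Phat sa.1 sa.2 s' * V s')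
          - ρ t sa * V sa.1 := by
      intro sa; rw [hlogpi, hQ]; ring
    simp only [h]
    rw [Finset.sum_sub_distrib, Finset.sum_add_distrib, ← Finset.mul_sum]
  have hsplit : (∑' t : ℕ, γ ^ t * ∑ sa : S × A, ρ t sa * logpi sa.1 sa.2) =
      (∑' t : ℕ, γ ^ t * ∑ sa : S × A, ρ t sa * R sa.1 sa.2)
        + γ * (∑' t : ℕ, γ ^ t * ∑ sa : S × A, ρ t sa * ∑ s', Phat sa.1 sa.2 s' * V s')
        - ∑' t, γ ^ t * W t := by
    rw [← tsum_mul_left, ← Summable.tsum_add ((hsum _)) (Summable.mul_left γ (hsum _)),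
      ← Summable.tsum_sub (Summable.add (hsum _) (Summable.mul_left γ (hsum _))) hsumW]
    apply tsum_congr
    intro t
    rw [hdecomp]
    ring
  have hdiff : (∑' t : ℕ, γ ^ t * ∑ sa : S × A, ρ t sa *
        ((∑ s', Phat sa.1 sa.2 s' * V s') - (∑ s', P sa.1 sa.2 s' * V s'))) =
      (∑' t : ℕ, γ ^ t * ∑ sa : S × A, ρ t sa * ∑ s', Phat sa.1 sa.2 s' * V s')
        - (∑' t : ℕ, γ ^ t * ∑ sa : S × A, ρ t sa * ∑ s', P sa.1 sa.2 s' * V s') := by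
    rw [← Summable.tsum_sub (hsum _) (hsum _)]
    apply tsum_congr
    intro t
    rw [← mul_sub, ← Finset.sum_sub_distrib]
    congr 1; congr 1; ext sa
    ring
  rw [hsplit, htel, hdiff]
  ring
end
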